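/- Let φ₁ = arctan(1/√2), L = π/2 − 5φ₁/3, d₉ = 2√2/√(1 + sin²(5φ₁/3)) and d₁₀ = L/sin(L). Then the function x ↦ √(d₁₀/x + d₉) is interval-integrable on (0, L) and (1/2)·∫ from 0 to L of √(d₁₀/x + d₉) dx ≤ 0.89. -/

import Mathlib

/-!
Write `d₁₀ = a`, `d₉ = b`. The function `G(x) = √x √(a + bx) + (a/√b) arsinh(√(bx/a))`
is an antiderivative of `√(a/x + b)` on `(0, ∞)`; it is continuous at `0` with `G 0 = 0`, and
since the integrand is nonnegative, integrability on `(0, L)` comes for free from the fundamental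
theorem of calculus.

The integral is monotone in `a`, `b` and `L`, so only upper bounds are needed:
`0.613 ≤ φ₁` (from `cos φ₁ = √(2/3)` and a fourth-order lower bound for the cosine) gives
`L ≤ 0.5492`; then `sin L ≥ L - L³/6` gives `d₁₀ ≤ 1.053`, and, since `sin (5φ₁/3) = cos L ≥
1 - L²/2`, also `d₉ ≤ 2.157`. Finally `G` at these values is at most `1.78`.
-/

open Real MeasureTheory Set

namespace Real

lemma one_sub_sq_div_two_add_pow_four_div_thirty_two_le_cos {x : ℝ} (hx : x ^ 2 ≤ 8) :
    1 - x ^ 2 / 2 + x ^ 4 / 32 ≤ cos x := by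
  have hhalf := one_sub_sq_div_two_le_cos (x := x / 2)
  have hnonneg : 0 ≤ 1 - (x / 2) ^ 2 / 2 := by nlinarith
  have hsq := pow_le_pow_left₀ hnonneg hhalf 2
  have hdouble := cos_sq (x / 2)
  rw [mul_div_cancel₀ x two_ne_zero] at hdouble
  nlinarith

lemma le_arctan_of_one_div_sqrt_le_cos {q y : ℝ} (hq : 0 ≤ q) (hqπ : q ≤ π) (hy : 0 ≤ y)
    (h : 1 / √(1 + y ^ 2) ≤ cos q) : q ≤ arctan y := by
  rw [← cos_arctan] at h
  refine (strictAntiOn_cos.le_iff_ge ⟨arctan_nonneg.2 hy, ?_⟩ ⟨hq, hqπ⟩).1 h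
  linarith [arctan_lt_pi_div_two y, pi_pos]

lemma div_sin_le_inv_one_sub_sq_div_six {x : ℝ} (hx : 0 < x) (hx6 : x ^ 2 < 6) :
    x / sin x ≤ (1 - x ^ 2 / 6)⁻¹ := by
  have hpos : 0 < x * (1 - x ^ 2 / 6) := mul_pos hx (by linarith)
  calc x / sin x ≤ x / (x * (1 - x ^ 2 / 6)) :=
        div_le_div_of_nonneg_left hx.le hpos (by linarith [sin_ge_sub_cube hx.le])
    _ = (1 - x ^ 2 / 6)⁻¹ := by rw [div_mul_cancel_left₀ hx.ne']

end Real

noncomputable def sqrtDivAddAntideriv (a b x : ℝ) : ℝ :=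
  √x * √(a + b * x) + a / √b * arsinh (√b * √x / √a)

lemma continuous_sqrtDivAddAntideriv (a b : ℝ) : Continuous (sqrtDivAddAntideriv a b) :=
  (continuous_sqrt.mul (by fun_prop)).add
    (continuous_const.mul (continuous_arsinh.comp (by fun_prop)))

section SqrtDivAdd

variable {a b : ℝ}

lemma hasDerivAt_sqrtDivAddAntideriv (ha : 0 < a) (hb : 0 < b) {x : ℝ} (hx : 0 < x) :
    HasDerivAt (sqrtDivAddAntideriv a b) √(a / x + b) x := by
  have hsqrt := hasDerivAt_sqrt hx.ne'
  have hlin : HasDerivAt (fun y => a + b * y) b x := by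
    simpa using ((hasDerivAt_id x).const_mul b).const_add a
  have h := (hsqrt.mul (hlin.sqrt (by positivity))).add
    (((hsqrt.const_mul √b).div_const √a).arsinh.const_mul (a / √b))
  refine h.congr_deriv ?_
  have hden : √(1 + (√b * √x / √a) ^ 2) = √(a + b * x) / √a := by
    rw [div_pow, mul_pow, sq_sqrt hb.le, sq_sqrt hx.le, sq_sqrt ha.le, ← sqrt_div (by positivity)]
    congr 1
    field_simp
  have htarget : √(a / x + b) = √(a + b * x) / √x := by
    rw [← sqrt_div (by positivity), add_div, mul_div_cancel_right₀ _ hx.ne']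
  rw [hden, htarget, smul_eq_mul]
  field_simp
  rw [sq_sqrt (by positivity), sq_sqrt hx.le]
  ring

lemma intervalIntegrable_sqrt_div_add (ha : 0 < a) (hb : 0 < b) {L : ℝ} (hL : 0 ≤ L) :
    IntervalIntegrable (fun x => √(a / x + b)) volume 0 L := by
  refine intervalIntegral.intervalIntegrable_deriv_of_nonneg
    (continuous_sqrtDivAddAntideriv a b).continuousOn
    (fun x hx => hasDerivAt_sqrtDivAddAntideriv ha hb ?_) (fun _ _ => sqrt_nonneg _)
  simpa [hL] using hx.1

lemma integral_sqrt_div_add (ha : 0 < a) (hb : 0 < b) {L : ℝ} (hL : 0 ≤ L) :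
    ∫ x in 0..L, √(a / x + b) = sqrtDivAddAntideriv a b L := by
  rw [intervalIntegral.integral_eq_sub_of_hasDeriv_right_of_le hL
    (continuous_sqrtDivAddAntideriv a b).continuousOn
    (fun x hx => (hasDerivAt_sqrtDivAddAntideriv ha hb hx.1).hasDerivWithinAt)
    (intervalIntegrable_sqrt_div_add ha hb hL)]
  simp [sqrtDivAddAntideriv]

lemma integral_sqrt_div_add_mono {A B L L' : ℝ} (ha : 0 < a) (hb : 0 < b) (haA : a ≤ A)
    (hbB : b ≤ B) (hL : 0 ≤ L) (hLL' : L ≤ L') :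
    ∫ x in 0..L, √(a / x + b) ≤ ∫ x in 0..L', √(A / x + B) := by
  have hA := ha.trans_le haA
  have hB := hb.trans_le hbB
  calc ∫ x in 0..L, √(a / x + b) ≤ ∫ x in 0..L, √(A / x + B) := by
        refine intervalIntegral.integral_mono_on hL (intervalIntegrable_sqrt_div_add ha hb hL)
          (intervalIntegrable_sqrt_div_add hA hB hL) fun x hx => ?_
        have hx0 : 0 ≤ x := hx.1
        gcongr
    _ ≤ ∫ x in 0..L', √(A / x + B) :=
        intervalIntegral.integral_mono_interval le_rfl hL hLL'
          (ae_of_all _ fun _ => sqrt_nonneg _)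
          (intervalIntegrable_sqrt_div_add hA hB (hL.trans hLL'))

end SqrtDivAdd

namespace TetrahedralDihedral

lemma arctan_one_div_sqrt_two_mem_Ico : arctan (1 / √2) ∈ Ico 0.613 (π / 4) := by
  constructor
  · refine le_arctan_of_one_div_sqrt_le_cos (by norm_num) (by linarith [pi_gt_three])
      (by positivity) ?_
    refine le_trans ?_ (one_sub_sq_div_two_add_pow_four_div_thirty_two_le_cos (by norm_num))
    rw [div_pow, one_pow, sq_sqrt zero_le_two, one_div_le (by positivity) (by norm_num),
      le_sqrt (by norm_num) (by norm_num)]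
    norm_num
  · rw [← arctan_one]
    exact arctan_strictMono ((div_lt_one (by positivity)).2 one_lt_sqrt_two)

lemma two_mul_sqrt_two_div_sqrt_one_add_sq_le {c : ℝ} (hc : 0.849 ≤ c) :
    2 * √2 / √(1 + c ^ 2) ≤ 2.157 := by
  have h2 := sq_sqrt (zero_le_two (α := ℝ))
  have hc2 := sq_sqrt (show 0 ≤ 1 + c ^ 2 by positivity)
  rw [div_le_iff₀ (by positivity)]
  nlinarith [sqrt_nonneg 2, sqrt_nonneg (1 + c ^ 2)]

lemma sqrtDivAddAntideriv_le : sqrtDivAddAntideriv 1.053 2.157 0.5492 ≤ 1.78 := by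
  have hfirst : √0.5492 * √(1.053 + 2.157 * 0.5492) ≤ 1.1086 := by
    rw [← sqrt_mul (by norm_num), sqrt_le_left (by norm_num)]
    norm_num
  have hcoef : 1.053 / √2.157 ≤ 0.717 := by
    rw [div_le_iff₀ (by positivity), ← div_le_iff₀' (by norm_num),
      le_sqrt (by norm_num) (by norm_num)]
    norm_num
  have harg : √2.157 * √0.5492 / √1.053 ≤ 1.0607 := by
    rw [← sqrt_mul (by norm_num), ← sqrt_div (by norm_num), sqrt_le_left (by norm_num)]
    norm_num
  have hexp : (2.52 : ℝ) ≤ exp 0.93 := by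
    refine le_trans ?_ (sum_le_exp_of_nonneg (by norm_num) 5)
    norm_num [Finset.sum_range_succ, Nat.factorial]
  have harsinh : arsinh (√2.157 * √0.5492 / √1.053) ≤ 0.93 := by
    rw [← exp_le_exp, exp_arsinh]
    refine le_trans ?_ hexp
    have hsqrt : √(1 + (√2.157 * √0.5492 / √1.053) ^ 2) ≤ 1.4578 := by
      rw [sqrt_le_left (by norm_num)]
      nlinarith [show (0 : ℝ) ≤ √2.157 * √0.5492 / √1.053 by positivity]
    linarith
  have hprod : 1.053 / √2.157 * arsinh (√2.157 * √0.5492 / √1.053) ≤ 0.717 * 0.93 :=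
    mul_le_mul hcoef harsinh (arsinh_nonneg_iff.2 (by positivity)) (by norm_num)
  unfold sqrtDivAddAntideriv
  linarith

end TetrahedralDihedral

open TetrahedralDihedral in
theorem newtonian_tetrahedral_left_branch_bound :
    IntervalIntegrable
      (fun x : ℝ => Real.sqrt
        (((π/2 - 5 * Real.arctan (1 / Real.sqrt 2) / 3) /
            Real.sin (π/2 - 5 * Real.arctan (1 / Real.sqrt 2) / 3)) / x +
          2 * Real.sqrt 2 / Real.sqrt (1 + Real.sin (5 * Real.arctan (1 / Real.sqrt 2) / 3) ^ 2)))
      volume 0 (π/2 - 5 * Real.arctan (1 / Real.sqrt 2) / 3) ∧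
    (1/2) * ∫ x in (0:ℝ)..(π/2 - 5 * Real.arctan (1 / Real.sqrt 2) / 3),
        Real.sqrt
          (((π/2 - 5 * Real.arctan (1 / Real.sqrt 2) / 3) /
              Real.sin (π/2 - 5 * Real.arctan (1 / Real.sqrt 2) / 3)) / x +
            2 * Real.sqrt 2 / Real.sqrt (1 + Real.sin (5 * Real.arctan (1 / Real.sqrt 2) / 3) ^ 2))
      ≤ 0.89 := by
  set φ := arctan (1 / √2)
  set L := π / 2 - 5 * φ / 3 with hL
  have hsin : sin (5 * φ / 3) = cos L := by rw [← sin_pi_div_two_sub, hL, sub_sub_cancel]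
  rw [hsin]
  obtain ⟨hφ_ge, hφ_lt⟩ := arctan_one_div_sqrt_two_mem_Ico
  have hL_pos : 0 < L := by linarith
  have hL_le : L ≤ 0.5492 := by linarith [pi_lt_d4]
  have ha_pos : 0 < L / sin L := div_pos hL_pos (sin_pos_of_pos_of_lt_pi hL_pos (by linarith))
  have ha_le : L / sin L ≤ 1.053 :=
    (div_sin_le_inv_one_sub_sq_div_six hL_pos (by nlinarith)).trans
      (inv_le_of_inv_le₀ (by norm_num) (by nlinarith))
  have hb_le : 2 * √2 / √(1 + cos L ^ 2) ≤ 2.157 :=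
    two_mul_sqrt_two_div_sqrt_one_add_sq_le (by nlinarith [one_sub_sq_div_two_le_cos (x := L)])
  have hb_pos : 0 < 2 * √2 / √(1 + cos L ^ 2) := by positivity
  refine ⟨intervalIntegrable_sqrt_div_add ha_pos hb_pos hL_pos.le, ?_⟩
  have hint := (integral_sqrt_div_add_mono ha_pos hb_pos ha_le hb_le hL_pos.le hL_le).trans_eq
    (integral_sqrt_div_add (by norm_num) (by norm_num) (by norm_num))
  linarith [sqrtDivAddAntideriv_le]
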